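/- arXiv:0712.0939 — 4 statements merged into one kernel-verified Lean document; each statement's English description precedes it below -/
import Mathlib

section
/- Let w_1,…,w_n ∈ [0,1] with N := Σ_{i=1}^n w_i > 0, let θ* ∈ Θ, and let Y_1,…,Y_n be independent random variables such that Y_i has law P_{θ*} for every i with w_i > 0. Set θ̃ := Σ_{i=1}^n w_i·Y_i / N and assume θ̃ ∈ Θ almost surely. If α ∈ (0,1) and z_α > 0 satisfies 2·e^{−z_α} ≤ α, then the set E_α := {θ' ∈ Θ : N·K(θ̃, θ') ≤ z_α} is an α-confidence set: P(θ* ∈ E_α) ≥ 1 − α. -/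
/-!
Chernoff's method. Exponential tilting gives `E exp ((C u - C θ*) Y) = exp (B u - B θ*)` for
`Y ∼ P_θ*` and `u ∈ Θ`; Jensen's inequality for `x ↦ x ^ w` (`0 ≤ w ≤ 1`) and independence then
give `E exp ((C u - C θ*) ∑ wᵢ Yᵢ) ≤ exp (N (B u - B θ*))`, so the Chernoff bound for `θ̃ ≥ u`
(resp. `θ̃ ≤ u`) is `exp (-N K(u, θ*))`. Applied at the point closest to `θ*` of the compact set
`{u ∈ Θ | N K(u, θ*) ≥ z}` on either side of `θ*`, this bounds each half of the event
`N K(θ̃, θ*) > z` by `e^{-z}`.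
-/

open MeasureTheory ProbabilityTheory Real BigOperators Set

namespace ProbabilityTheory

variable {Ω : Type*} [MeasurableSpace Ω] {μ : Measure Ω} {X : Ω → ℝ} {s t D : ℝ}

theorem integrable_exp_mul_mul_of_mem_Icc [IsFiniteMeasure μ]
    (hint : Integrable (fun ω => exp (t * X ω)) μ) (hs : s ∈ Icc 0 1) :
    Integrable (fun ω => exp (s * t * X ω)) μ := by
  rcases le_total 0 t with ht | ht
  · exact integrable_exp_mul_of_nonneg_of_le hint (mul_nonneg hs.1 ht)
      (mul_le_of_le_one_left ht hs.2)
  · exact integrable_exp_mul_of_nonpos_of_ge hint (mul_nonpos_of_nonneg_of_nonpos hs.1 ht)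
      (by nlinarith [hs.2])

theorem mgf_mul_le_rpow [IsProbabilityMeasure μ]
    (hint : Integrable (fun ω => exp (t * X ω)) μ) (hs : s ∈ Icc 0 1) :
    mgf X μ (s * t) ≤ mgf X μ t ^ s := by
  have hpow : ∀ ω, exp (t * X ω) ^ s = exp (s * t * X ω) := fun ω => by
    rw [← exp_mul]; ring_nf
  have hjensen := (concaveOn_rpow hs.1 hs.2).le_map_integral (μ := μ)
    (continuousOn_id.rpow_const fun _ _ => Or.inr hs.1) isClosed_Ici
    (ae_of_all _ fun ω => (exp_pos (t * X ω)).le) hint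
    (by simpa only [Function.comp_def, hpow] using integrable_exp_mul_mul_of_mem_Icc hint hs)
  simpa only [hpow, mgf] using hjensen

theorem mgf_const_mul_le_exp_mul [IsProbabilityMeasure μ]
    (hint : Integrable (fun ω => exp (t * X ω)) μ) (hmgf : mgf X μ t ≤ exp D)
    (hs : s ∈ Icc 0 1) :
    mgf (fun ω => s * X ω) μ t ≤ exp (s * D) := by
  rw [mgf_const_mul]
  calc mgf X μ (s * t) ≤ mgf X μ t ^ s := mgf_mul_le_rpow hint hs
    _ ≤ exp D ^ s := rpow_le_rpow mgf_nonneg hmgf hs.1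
    _ = exp (s * D) := by rw [← exp_mul, mul_comm]

theorem integrable_exp_mul_and_mgf_const_mul_le [IsProbabilityMeasure μ] (hs : s ∈ Icc 0 1)
    (hint : 0 < s → Integrable (fun ω => exp (t * X ω)) μ)
    (hmgf : 0 < s → mgf X μ t ≤ exp D) :
    Integrable (fun ω => exp (t * (s * X ω))) μ ∧ mgf (fun ω => s * X ω) μ t ≤ exp (s * D) := by
  rcases hs.1.eq_or_lt with rfl | hpos
  · simp [mgf]
  · refine ⟨?_, mgf_const_mul_le_exp_mul (hint hpos) (hmgf hpos) hs⟩
    simpa only [mul_left_comm t s, mul_assoc] using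
      integrable_exp_mul_mul_of_mem_Icc (hint hpos) hs

section WeightedSum

variable {ι : Type*} [Fintype ι] {Y : ι → Ω → ℝ} {w : ι → ℝ}

theorem iIndepFun.integrable_exp_mul_and_mgf_weightedSum_le (hindep : iIndepFun Y μ)
    (hmeas : ∀ i, Measurable (Y i)) (hw : ∀ i, w i ∈ Icc 0 1)
    (hint : ∀ i, 0 < w i → Integrable (fun ω => exp (t * Y i ω)) μ)
    (hmgf : ∀ i, 0 < w i → mgf (Y i) μ t ≤ exp D) :
    Integrable (fun ω => exp (t * ∑ i, w i * Y i ω)) μ ∧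
      mgf (fun ω => ∑ i, w i * Y i ω) μ t ≤ exp ((∑ i, w i) * D) := by
  have := hindep.isProbabilityMeasure
  have hterm i := integrable_exp_mul_and_mgf_const_mul_le (hw i) (hint i) (hmgf i)
  have hindep' : iIndepFun (fun i ω => w i * Y i ω) μ :=
    hindep.comp (fun i y => w i * y) fun i => measurable_const_mul (w i)
  have hmeas' i : Measurable fun ω => w i * Y i ω := (hmeas i).const_mul (w i)
  have hsum : (fun ω => ∑ i, w i * Y i ω) = ∑ i, fun ω => w i * Y i ω := by
    ext ω; simp only [Finset.sum_apply]
  rw [hsum]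
  refine ⟨?_, ?_⟩
  · simpa only [Finset.sum_apply] using
      hindep'.integrable_exp_mul_sum hmeas' fun i _ => (hterm i).1
  · calc mgf (∑ i, fun ω => w i * Y i ω) μ t = ∏ i, mgf (fun ω => w i * Y i ω) μ t :=
          hindep'.mgf_sum hmeas' Finset.univ
      _ ≤ ∏ i, exp (w i * D) :=
          Finset.prod_le_prod (fun i _ => mgf_nonneg) fun i _ => (hterm i).2
      _ = exp ((∑ i, w i) * D) := by rw [← exp_sum, Finset.sum_mul]

end WeightedSum

end ProbabilityTheory

/-- The member of the exponential family with natural parameter `c` and log-partition value `b`. -/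
noncomputable def expFamilyMeasure (ν : Measure ℝ) (q : ℝ → ℝ) (c b : ℝ) : Measure ℝ :=
  ν.withDensity fun y => ENNReal.ofReal (q y * exp (y * c - b))

section ExpFamily

variable {ν : Measure ℝ} {q : ℝ → ℝ} {c₁ b₁ c₂ b₂ : ℝ}

theorem lintegral_exp_mul_expFamilyMeasure (hq : Measurable q) :
    ∫⁻ y, ENNReal.ofReal (exp ((c₂ - c₁) * y)) ∂expFamilyMeasure ν q c₁ b₁ =
      ENNReal.ofReal (exp (b₂ - b₁)) * expFamilyMeasure ν q c₂ b₂ univ := by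
  have hdens (c b : ℝ) : Measurable fun y => ENNReal.ofReal (q y * exp (y * c - b)) :=
    (hq.mul (by fun_prop)).ennreal_ofReal
  rw [expFamilyMeasure, lintegral_withDensity_eq_lintegral_mul _ (hdens c₁ b₁) (by fun_prop),
    expFamilyMeasure, withDensity_apply _ MeasurableSet.univ, Measure.restrict_univ,
    ← lintegral_const_mul _ (hdens c₂ b₂)]
  refine lintegral_congr fun y => ?_
  rw [Pi.mul_apply, ← ENNReal.ofReal_mul' (exp_pos _).le, ← ENNReal.ofReal_mul (exp_pos _).le,
    mul_assoc, ← exp_add, mul_left_comm, ← exp_add]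
  ring_nf

variable {Ω : Type*} [MeasurableSpace Ω] {P : Measure Ω} {Y : Ω → ℝ}

theorem integrable_exp_mul_of_map_eq_expFamilyMeasure (hq : Measurable q) (hY : AEMeasurable Y P)
    (hlaw : P.map Y = expFamilyMeasure ν q c₁ b₁)
    [IsFiniteMeasure (expFamilyMeasure ν q c₂ b₂)] :
    Integrable (fun ω => exp ((c₂ - c₁) * Y ω)) P := by
  have hsm : AEStronglyMeasurable (fun y => exp ((c₂ - c₁) * y)) (P.map Y) := by
    fun_prop
  refine (integrable_map_measure hsm hY).1 ⟨hsm, ?_⟩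
  rw [hasFiniteIntegral_iff_ofReal (ae_of_all _ fun y => (exp_pos _).le), hlaw,
    lintegral_exp_mul_expFamilyMeasure (b₂ := b₂) hq]
  exact ENNReal.mul_lt_top ENNReal.ofReal_lt_top (measure_lt_top _ _)

theorem mgf_of_map_eq_expFamilyMeasure (hq : Measurable q) (hY : AEMeasurable Y P)
    (hlaw : P.map Y = expFamilyMeasure ν q c₁ b₁)
    [IsProbabilityMeasure (expFamilyMeasure ν q c₂ b₂)] :
    mgf Y P (c₂ - c₁) = exp (b₂ - b₁) := by
  rw [← mgf_id_map hY, hlaw, mgf, integral_eq_lintegral_of_nonneg_ae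
    (ae_of_all _ fun y => (exp_pos _).le) (by fun_prop)]
  simp only [id]
  rw [lintegral_exp_mul_expFamilyMeasure (b₂ := b₂) hq, measure_univ, mul_one,
    ENNReal.toReal_ofReal (exp_pos _).le]

end ExpFamily

theorem IsCompact.sep_le {X : Type*} [TopologicalSpace X] [T2Space X] {s : Set X}
    (hs : IsCompact s) {f : X → ℝ} (hf : ContinuousOn f s) (z : ℝ) :
    IsCompact {x ∈ s | z ≤ f x} :=
  hs.of_isClosed_subset (hf.preimage_isClosed_of_isClosed hs.isClosed isClosed_Ici)
    fun _ hx => hx.1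

section Tails

variable {Ω : Type*} [MeasurableSpace Ω] {μ : Measure Ω} {T : Ω → ℝ} {S : Set ℝ} {ε : ENNReal}

theorem IsCompact.measure_preimage_le_of_forall_measure_Ici_le (hS : IsCompact S)
    (h : ∀ u ∈ S, μ (T ⁻¹' Ici u) ≤ ε) : μ (T ⁻¹' S) ≤ ε := by
  rcases S.eq_empty_or_nonempty with rfl | hne
  · simp
  obtain ⟨u, huS, hu⟩ := hS.exists_isLeast hne
  exact (measure_mono (preimage_mono fun _ hx => hu hx)).trans (h u huS)

theorem IsCompact.measure_preimage_le_of_forall_measure_Iic_le (hS : IsCompact S)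
    (h : ∀ u ∈ S, μ (T ⁻¹' Iic u) ≤ ε) : μ (T ⁻¹' S) ≤ ε := by
  rcases S.eq_empty_or_nonempty with rfl | hne
  · simp
  obtain ⟨u, huS, hu⟩ := hS.exists_isGreatest hne
  exact (measure_mono (preimage_mono fun _ hx => hu hx)).trans (h u huS)

variable {X : Ω → ℝ} {t c : ℝ}

theorem measure_ge_le_exp_of_mgf_le [IsFiniteMeasure μ] (ht : 0 ≤ t)
    (hint : Integrable (fun ω => exp (t * X ω)) μ) (hmgf : mgf X μ t ≤ exp c) (x : ℝ) :
    μ {ω | x ≤ X ω} ≤ ENNReal.ofReal (exp (c - t * x)) := by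
  rw [ENNReal.le_ofReal_iff_toReal_le (measure_ne_top _ _) (exp_pos _).le, sub_eq_neg_add,
    exp_add, ← neg_mul]
  exact (measure_ge_le_exp_mul_mgf x ht hint).trans
    (mul_le_mul_of_nonneg_left hmgf (exp_pos _).le)

theorem measure_le_le_exp_of_mgf_le [IsFiniteMeasure μ] (ht : t ≤ 0)
    (hint : Integrable (fun ω => exp (t * X ω)) μ) (hmgf : mgf X μ t ≤ exp c) (x : ℝ) :
    μ {ω | X ω ≤ x} ≤ ENNReal.ofReal (exp (c - t * x)) := by
  rw [ENNReal.le_ofReal_iff_toReal_le (measure_ne_top _ _) (exp_pos _).le, sub_eq_neg_add,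
    exp_add, ← neg_mul]
  exact (measure_le_le_exp_mul_mgf x ht hint).trans
    (mul_le_mul_of_nonneg_left hmgf (exp_pos _).le)

theorem one_sub_measure_compl_le [IsProbabilityMeasure μ] (s : Set Ω) : 1 - μ sᶜ ≤ μ s := by
  rw [tsub_le_iff_right, ← measure_univ (μ := μ), ← union_compl_self s]
  exact measure_union_le s sᶜ

theorem IsCompact.ofReal_one_sub_two_mul_exp_le_measure [IsProbabilityMeasure μ] {Θ : Set ℝ}
    (hΘ : IsCompact Θ) {f : ℝ → ℝ} (hf : ContinuousOn f Θ) (hT : ∀ᵐ ω ∂μ, T ω ∈ Θ) {m : ℝ}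
    (hupper : ∀ u ∈ Θ, m ≤ u → μ {ω | u ≤ T ω} ≤ ENNReal.ofReal (exp (-f u)))
    (hlower : ∀ u ∈ Θ, u ≤ m → μ {ω | T ω ≤ u} ≤ ENNReal.ofReal (exp (-f u))) (z : ℝ) :
    ENNReal.ofReal (1 - 2 * exp (-z)) ≤ μ {ω | T ω ∈ Θ ∧ f (T ω) ≤ z} := by
  have hrate (u : ℝ) (hu : z ≤ f u) : ENNReal.ofReal (exp (-f u)) ≤ ENNReal.ofReal (exp (-z)) :=
    ENNReal.ofReal_le_ofReal (exp_le_exp.2 (neg_le_neg hu))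
  set Sup := {θ ∈ Θ ∩ Ici m | z ≤ f θ}
  set Slo := {θ ∈ Θ ∩ Iic m | z ≤ f θ}
  have hup : μ (T ⁻¹' Sup) ≤ ENNReal.ofReal (exp (-z)) :=
    ((hΘ.inter_right isClosed_Ici).sep_le (hf.mono inter_subset_left) z
      ).measure_preimage_le_of_forall_measure_Ici_le fun u hu =>
        (hupper u hu.1.1 hu.1.2).trans (hrate u hu.2)
  have hlo : μ (T ⁻¹' Slo) ≤ ENNReal.ofReal (exp (-z)) :=
    ((hΘ.inter_right isClosed_Iic).sep_le (hf.mono inter_subset_left) z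
      ).measure_preimage_le_of_forall_measure_Iic_le fun u hu =>
        (hlower u hu.1.1 hu.1.2).trans (hrate u hu.2)
  have hcover : {ω | T ω ∈ Θ ∧ f (T ω) ≤ z}ᶜ ⊆ {ω | T ω ∉ Θ} ∪ T ⁻¹' Sup ∪ T ⁻¹' Slo := by
    intro ω hω
    by_cases hΘω : T ω ∈ Θ
    · have hz : z ≤ f (T ω) := (not_le.1 fun h => hω ⟨hΘω, h⟩).le
      rcases le_total m (T ω) with h | h
      · exact Or.inl (Or.inr ⟨⟨hΘω, h⟩, hz⟩)
      · exact Or.inr ⟨⟨hΘω, h⟩, hz⟩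
    · exact Or.inl (Or.inl hΘω)
  have hbad : μ {ω | T ω ∈ Θ ∧ f (T ω) ≤ z}ᶜ ≤ ENNReal.ofReal (2 * exp (-z)) := calc
    _ ≤ μ {ω | T ω ∉ Θ} + μ (T ⁻¹' Sup) + μ (T ⁻¹' Slo) :=
      (measure_mono hcover).trans <|
        (measure_union_le _ _).trans (add_le_add_left (measure_union_le _ _) _)
    _ ≤ 0 + ENNReal.ofReal (exp (-z)) + ENNReal.ofReal (exp (-z)) := by
      gcongr
      exact (ae_iff.1 hT).le
    _ = ENNReal.ofReal (2 * exp (-z)) := by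
      rw [zero_add, ← ENNReal.ofReal_add (exp_pos _).le (exp_pos _).le, two_mul]
  calc ENNReal.ofReal (1 - 2 * exp (-z)) = 1 - ENNReal.ofReal (2 * exp (-z)) := by
        rw [ENNReal.ofReal_sub _ (by positivity), ENNReal.ofReal_one]
    _ ≤ 1 - μ {ω | T ω ∈ Θ ∧ f (T ω) ≤ z}ᶜ := tsub_le_tsub_left hbad 1
    _ ≤ μ {ω | T ω ∈ Θ ∧ f (T ω) ≤ z} := one_sub_measure_compl_le _

end Tails

section WeightedMean

variable {ν : Measure ℝ} {q : ℝ → ℝ} {Θ : Set ℝ} {B C : ℝ → ℝ} {Pθ : ℝ → Measure ℝ}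
  {Ω : Type*} [MeasurableSpace Ω] {P : Measure Ω} {ι : Type*} [Fintype ι] {w : ι → ℝ}
  {Y : ι → Ω → ℝ} {T : Ω → ℝ} {N θstar u : ℝ}

theorem integrable_exp_mul_and_mgf_weightedMean_le (hq : Measurable q)
    (hPθ : ∀ a ∈ Θ, Pθ a = expFamilyMeasure ν q (C a) (B a))
    (hPθprob : ∀ a ∈ Θ, IsProbabilityMeasure (Pθ a))
    (hw : ∀ i, w i ∈ Icc 0 1) (hYmeas : ∀ i, Measurable (Y i)) (hYindep : iIndepFun Y P)
    (hθstar : θstar ∈ Θ) (hYlaw : ∀ i, 0 < w i → P.map (Y i) = Pθ θstar)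
    (hN : N = ∑ i, w i) (hNpos : 0 < N) (hT : ∀ ω, T ω = (∑ i, w i * Y i ω) / N)
    (hu : u ∈ Θ) :
    Integrable (fun ω => exp (N * (C u - C θstar) * T ω)) P ∧
      mgf T P (N * (C u - C θstar)) ≤ exp (N * (B u - B θstar)) := by
  have : IsProbabilityMeasure (expFamilyMeasure ν q (C u) (B u)) := hPθ u hu ▸ hPθprob u hu
  have hlaw i (hi : 0 < w i) : P.map (Y i) = expFamilyMeasure ν q (C θstar) (B θstar) :=
    (hYlaw i hi).trans (hPθ θstar hθstar)
  obtain ⟨hint, hmgf⟩ := hYindep.integrable_exp_mul_and_mgf_weightedSum_le hYmeas hw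
    (fun i hi => integrable_exp_mul_of_map_eq_expFamilyMeasure (b₂ := B u) hq
      (hYmeas i).aemeasurable (hlaw i hi))
    (fun i hi => (mgf_of_map_eq_expFamilyMeasure (c₂ := C u) (b₂ := B u) hq
      (hYmeas i).aemeasurable (hlaw i hi)).le)
  have hexp : (fun ω => exp (N * (C u - C θstar) * T ω)) =
      fun ω => exp ((C u - C θstar) * ∑ i, w i * Y i ω) := by
    ext ω
    rw [hT, mul_comm N, mul_assoc, mul_div_cancel₀ _ hNpos.ne']
  rw [← hN] at hmgf
  exact ⟨hexp ▸ hint, by simpa only [mgf, hexp] using hmgf⟩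

end WeightedMean

theorem KL_ball_confidence_set_general
    (Θ : Set ℝ) (hΘcomp : IsCompact Θ) (hΘconv : Convex ℝ Θ)
    (ν : Measure ℝ)
    (q : ℝ → ℝ) (hq : Measurable q)
    (B C B' C' : ℝ → ℝ)
    (hC : ∀ a ∈ Θ, HasDerivAt C (C' a) a)
    (hB : ∀ a ∈ Θ, HasDerivAt B (B' a) a)
    (hCpos : ∀ a ∈ Θ, 0 < C' a)
    (p : ℝ → ℝ → ℝ) (hp : ∀ y a, p y a = q y * Real.exp (y * C a - B a))
    (Pθ : ℝ → Measure ℝ)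
    (hPθ : ∀ a ∈ Θ, Pθ a = ν.withDensity (fun y => ENNReal.ofReal (p y a)))
    (hPθprob : ∀ a ∈ Θ, IsProbabilityMeasure (Pθ a))
    (K : ℝ → ℝ → ℝ)
    (hK : ∀ a b, K a b = a * (C a - C b) - B a + B b)
    {Ω : Type*} [MeasurableSpace Ω] (P : Measure Ω) [IsProbabilityMeasure P]
    (n : ℕ) (w : Fin n → ℝ) (hw : ∀ i, w i ∈ Set.Icc (0 : ℝ) 1)
    (N : ℝ) (hN : N = ∑ i, w i) (hNpos : 0 < N)
    (θstar : ℝ) (hθstar : θstar ∈ Θ)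
    (Y : Fin n → Ω → ℝ) (hYmeas : ∀ i, Measurable (Y i))
    (hYindep : iIndepFun Y P)
    (hYlaw : ∀ i, 0 < w i → Measure.map (Y i) P = Pθ θstar)
    (θt : Ω → ℝ) (hθt : ∀ ω, θt ω = (∑ i, w i * Y i ω) / N)
    (hθtΘ : ∀ᵐ ω ∂P, θt ω ∈ Θ)
    (α zα : ℝ)
    (hzαα : 2 * Real.exp (-zα) ≤ α) :
    ENNReal.ofReal (1 - α) ≤ P {ω | θstar ∈ {θ' ∈ Θ | N * K (θt ω) θ' ≤ zα}} := by
  have hCcont : ContinuousOn C Θ := fun a ha => (hC a ha).continuousAt.continuousWithinAt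
  have hBcont : ContinuousOn B Θ := fun a ha => (hB a ha).continuousAt.continuousWithinAt
  have hCmono : MonotoneOn C Θ := monotoneOn_of_hasDerivWithinAt_nonneg hΘconv hCcont
    (fun a ha => (hC a (interior_subset ha)).hasDerivWithinAt)
    fun a ha => (hCpos a (interior_subset ha)).le
  have hKcont : ContinuousOn (fun θ => N * K θ θstar) Θ := by
    simp only [hK]
    fun_prop
  have hPθ' : ∀ a ∈ Θ, Pθ a = expFamilyMeasure ν q (C a) (B a) := fun a ha => by
    rw [hPθ a ha, expFamilyMeasure]; simp only [hp]
  have hmgf u (hu : u ∈ Θ) := integrable_exp_mul_and_mgf_weightedMean_le hq hPθ' hPθprob hw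
    hYmeas hYindep hθstar hYlaw hN hNpos hθt hu
  have hrate u : exp (N * (B u - B θstar) - N * (C u - C θstar) * u) =
      exp (-(N * K u θstar)) := by
    rw [hK]; ring_nf
  calc ENNReal.ofReal (1 - α) ≤ ENNReal.ofReal (1 - 2 * exp (-zα)) :=
        ENNReal.ofReal_le_ofReal (by linarith)
    _ ≤ P {ω | θt ω ∈ Θ ∧ N * K (θt ω) θstar ≤ zα} := by
      refine hΘcomp.ofReal_one_sub_two_mul_exp_le_measure hKcont hθtΘ (m := θstar)
        (fun u hu hθu => ?_) (fun u hu huθ => ?_) zα <;> rw [← hrate]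
      · exact measure_ge_le_exp_of_mgf_le
          (mul_nonneg hNpos.le (sub_nonneg.2 (hCmono hθstar hu hθu)))
          (hmgf u hu).1 (hmgf u hu).2 u
      · exact measure_le_le_exp_of_mgf_le
          (mul_nonpos_of_nonneg_of_nonpos hNpos.le (sub_nonpos.2 (hCmono hu hθstar huθ)))
          (hmgf u hu).1 (hmgf u hu).2 u
    _ ≤ P {ω | θstar ∈ {θ' ∈ Θ | N * K (θt ω) θ' ≤ zα}} :=
      measure_mono fun ω hω => ⟨hθstar, hω.2⟩

/-- the Kullback–Leibler ball around the local MLE is an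
α-confidence set (Theorem 2.3). -/
theorem KL_ball_confidence_set
    (Θ : Set ℝ) (hΘcomp : IsCompact Θ) (hΘconv : Convex ℝ Θ)
    (ν : Measure ℝ) [SigmaFinite ν]
    (q : ℝ → ℝ) (hq : Measurable q) (hqnn : ∀ y, 0 ≤ q y)
    (B C B' C' : ℝ → ℝ)
    (hC : ∀ a ∈ Θ, HasDerivAt C (C' a) a)
    (hB : ∀ a ∈ Θ, HasDerivAt B (B' a) a)
    (hCcont : ContinuousOn C' Θ) (hBcont : ContinuousOn B' Θ)
    (hCpos : ∀ a ∈ Θ, 0 < C' a)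
    (hBeq : ∀ a ∈ Θ, B' a = a * C' a)
    (p : ℝ → ℝ → ℝ) (hp : ∀ y a, p y a = q y * Real.exp (y * C a - B a))
    (Pθ : ℝ → Measure ℝ)
    (hPθ : ∀ a ∈ Θ, Pθ a = ν.withDensity (fun y => ENNReal.ofReal (p y a)))
    (hPθprob : ∀ a ∈ Θ, IsProbabilityMeasure (Pθ a))
    (K : ℝ → ℝ → ℝ)
    (hK : ∀ a b, K a b = a * (C a - C b) - B a + B b)
    {Ω : Type*} [MeasurableSpace Ω] (P : Measure Ω) [IsProbabilityMeasure P]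
    (n : ℕ) (w : Fin n → ℝ) (hw : ∀ i, w i ∈ Set.Icc (0 : ℝ) 1)
    (N : ℝ) (hN : N = ∑ i, w i) (hNpos : 0 < N)
    (θstar : ℝ) (hθstar : θstar ∈ Θ)
    (Y : Fin n → Ω → ℝ) (hYmeas : ∀ i, Measurable (Y i))
    (hYindep : iIndepFun Y P)
    (hYlaw : ∀ i, 0 < w i → Measure.map (Y i) P = Pθ θstar)
    (θt : Ω → ℝ) (hθt : ∀ ω, θt ω = (∑ i, w i * Y i ω) / N)
    (hθtΘ : ∀ᵐ ω ∂P, θt ω ∈ Θ)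
    (α zα : ℝ) (hα : α ∈ Set.Ioo (0 : ℝ) 1) (hzα : 0 < zα)
    (hzαα : 2 * Real.exp (-zα) ≤ α) :
    ENNReal.ofReal (1 - α) ≤ P {ω | θstar ∈ {θ' ∈ Θ | N * K (θt ω) θ' ≤ zα}} :=
  KL_ball_confidence_set_general Θ hΘcomp hΘconv ν q hq B C B' C' hC hB hCpos p hp Pθ hPθ hPθprob K
    hK P n w hw N hN hNpos θstar hθstar Y hYmeas hYindep hYlaw θt hθt hθtΘ α zα hzαα
end

section
/- Let w_1,…,w_n ∈ [0,1] with N := Σ_{i=1}^n w_i > 0, let θ* ∈ Θ, and let Y_1,…,Y_n be i.i.d. with law P_{θ*}. Set θ̃ := Σ_{i=1}^n w_i·Y_i / N and assume θ̃ ∈ Θ almost surely. Then for every r > 0, E[(N·K(θ̃, θ*))^r] ≤ τ_r, where τ_r := 2·r·Γ(r). -/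
/-!
Chernoff's method. For `u ∈ Θ` put `t = C u - C θ*`. Tilting the density gives
`E exp (t Y) = exp (B u - B θ*)`, and for a weight `w ∈ [0, 1]` Jensen's inequality for the
concave map `x ↦ x ^ w` gives `E exp (t w Y) ≤ exp (w (B u - B θ*))`. By independence,
`P(θ̃ ≥ u) ≤ exp (-t N u + N (B u - B θ*)) = exp (-N K(u, θ*))` for `u ≥ θ*`, and symmetrically
for `u ≤ θ*`. As `∂ₐ K(a, θ*) = C a - C θ*`, the divergence decreases up to `θ*` and increases
after it, so the intermediate value theorem turns these bounds into
`P(N K(θ̃, θ*) > x) ≤ 2 exp (-x)`, and the layer-cake formula yields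
`E[(N K(θ̃, θ*))^r] ≤ 2 r ∫₀^∞ x^(r-1) e^(-x) dx = 2 r Γ(r)`.
-/

open MeasureTheory ProbabilityTheory Real BigOperators

open Set

def expFamilyKL (B C : ℝ → ℝ) (a b : ℝ) : ℝ := a * (C a - C b) - B a + B b

section Divergence

variable {s : Set ℝ} {B C C' : ℝ → ℝ}

lemma monotoneOn_of_forall_hasDerivAt_nonneg {f f' : ℝ → ℝ} (hs : Convex ℝ s)
    (hf : ∀ x ∈ s, HasDerivAt f (f' x) x) (hf' : ∀ x ∈ s, 0 ≤ f' x) : MonotoneOn f s :=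
  monotoneOn_of_hasDerivWithinAt_nonneg hs (fun x hx => (hf x hx).continuousAt.continuousWithinAt)
    (fun x hx => (hf x (interior_subset hx)).hasDerivWithinAt)
    fun x hx => hf' x (interior_subset hx)

lemma antitoneOn_of_forall_hasDerivAt_nonpos {f f' : ℝ → ℝ} (hs : Convex ℝ s)
    (hf : ∀ x ∈ s, HasDerivAt f (f' x) x) (hf' : ∀ x ∈ s, f' x ≤ 0) : AntitoneOn f s :=
  antitoneOn_of_hasDerivWithinAt_nonpos hs (fun x hx => (hf x hx).continuousAt.continuousWithinAt)
    (fun x hx => (hf x (interior_subset hx)).hasDerivWithinAt)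
    fun x hx => hf' x (interior_subset hx)

lemma hasDerivAt_expFamilyKL {a b : ℝ} (hC : HasDerivAt C (C' a) a)
    (hB : HasDerivAt B (a * C' a) a) :
    HasDerivAt (fun x => expFamilyKL B C x b) (C a - C b) a :=
  ((((hasDerivAt_id' a).mul (hC.sub_const (C b))).sub hB).add_const (B b)).congr_deriv (by ring)

lemma continuousOn_expFamilyKL {b : ℝ} (hC : ∀ a ∈ s, HasDerivAt C (C' a) a)
    (hB : ∀ a ∈ s, HasDerivAt B (a * C' a) a) :
    ContinuousOn (fun a => expFamilyKL B C a b) s := fun a ha =>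
  (hasDerivAt_expFamilyKL (hC a ha) (hB a ha)).continuousAt.continuousWithinAt

lemma monotoneOn_expFamilyKL {b : ℝ} (hs : Convex ℝ s) (hC : ∀ a ∈ s, HasDerivAt C (C' a) a)
    (hB : ∀ a ∈ s, HasDerivAt B (a * C' a) a) (hCpos : ∀ a ∈ s, 0 < C' a) (hb : b ∈ s) :
    MonotoneOn (fun a => expFamilyKL B C a b) (s ∩ Ici b) := by
  have hCmono : MonotoneOn C s :=
    monotoneOn_of_forall_hasDerivAt_nonneg hs hC fun a ha => (hCpos a ha).le
  refine monotoneOn_of_forall_hasDerivAt_nonneg (hs.inter (convex_Ici b))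
    (fun a ha => hasDerivAt_expFamilyKL (hC a ha.1) (hB a ha.1)) fun a ha => ?_
  exact sub_nonneg.2 (hCmono hb ha.1 ha.2)

lemma antitoneOn_expFamilyKL {b : ℝ} (hs : Convex ℝ s) (hC : ∀ a ∈ s, HasDerivAt C (C' a) a)
    (hB : ∀ a ∈ s, HasDerivAt B (a * C' a) a) (hCpos : ∀ a ∈ s, 0 < C' a) (hb : b ∈ s) :
    AntitoneOn (fun a => expFamilyKL B C a b) (s ∩ Iic b) := by
  have hCmono : MonotoneOn C s :=
    monotoneOn_of_forall_hasDerivAt_nonneg hs hC fun a ha => (hCpos a ha).le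
  refine antitoneOn_of_forall_hasDerivAt_nonpos (hs.inter (convex_Iic b))
    (fun a ha => hasDerivAt_expFamilyKL (hC a ha.1) (hB a ha.1)) fun a ha => ?_
  exact sub_nonpos.2 (hCmono ha.1 hb ha.2)

lemma expFamilyKL_self (B C : ℝ → ℝ) (b : ℝ) : expFamilyKL B C b b = 0 := by
  simp [expFamilyKL]

lemma expFamilyKL_nonneg {a b : ℝ} (hs : Convex ℝ s) (hC : ∀ a ∈ s, HasDerivAt C (C' a) a)
    (hB : ∀ a ∈ s, HasDerivAt B (a * C' a) a) (hCpos : ∀ a ∈ s, 0 < C' a) (ha : a ∈ s)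
    (hb : b ∈ s) : 0 ≤ expFamilyKL B C a b := by
  rw [← expFamilyKL_self B C b]
  rcases le_total b a with hba | hab
  · exact monotoneOn_expFamilyKL hs hC hB hCpos hb ⟨hb, self_mem_Ici⟩ ⟨ha, hba⟩ hba
  · exact antitoneOn_expFamilyKL hs hC hB hCpos hb ⟨ha, hab⟩ ⟨hb, self_mem_Iic⟩ hab

end Divergence

section Probability

variable {Ω ι : Type*} [MeasurableSpace Ω] {μ : Measure Ω}

lemma lintegral_exp_mul_withDensity_eq (ν : Measure ℝ) {q : ℝ → ℝ} (hq : Measurable q)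
    (c β c' β' : ℝ) :
    ∫⁻ y, ENNReal.ofReal (exp ((c' - c) * y))
        ∂ν.withDensity (fun y => ENNReal.ofReal (q y * exp (y * c - β)))
      = ENNReal.ofReal (exp (β' - β)) * ∫⁻ y, ENNReal.ofReal (q y * exp (y * c' - β')) ∂ν := by
  rw [lintegral_withDensity_eq_lintegral_mul _ (by fun_prop) (by fun_prop),
    ← lintegral_const_mul _ (by fun_prop)]
  congr 1 with y
  rw [Pi.mul_apply, ← ENNReal.ofReal_mul' (exp_pos _).le, ← ENNReal.ofReal_mul (exp_pos _).le,
    mul_assoc, ← exp_add, mul_left_comm, ← exp_add]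
  ring_nf

lemma integrable_exp_mul_and_mgf_eq_of_lintegral {X : Ω → ℝ} {t v : ℝ} (hX : AEMeasurable X μ)
    (hv : 0 ≤ v) (h : ∫⁻ ω, ENNReal.ofReal (exp (t * X ω)) ∂μ = ENNReal.ofReal v) :
    Integrable (fun ω => exp (t * X ω)) μ ∧ mgf X μ t = v := by
  have hm : AEStronglyMeasurable (fun ω => exp (t * X ω)) μ :=
    (hX.const_mul t).exp.aestronglyMeasurable
  have hnn : 0 ≤ᵐ[μ] fun ω => exp (t * X ω) := ae_of_all _ fun _ => (exp_pos _).le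
  refine ⟨⟨hm, ?_⟩, ?_⟩
  · rw [hasFiniteIntegral_iff_ofReal hnn, h]
    exact ENNReal.ofReal_lt_top
  · rw [mgf, integral_eq_lintegral_of_nonneg_ae hnn hm, h, ENNReal.toReal_ofReal hv]

lemma integrable_exp_mul_and_mgf_eq_of_map_eq_withDensity {ν : Measure ℝ} {q : ℝ → ℝ}
    {Y : Ω → ℝ} {c β c' β' : ℝ} (hq : Measurable q) (hY : Measurable Y)
    (hlaw : μ.map Y = ν.withDensity (fun y => ENNReal.ofReal (q y * exp (y * c - β))))
    (hmass : ∫⁻ y, ENNReal.ofReal (q y * exp (y * c' - β')) ∂ν = 1) :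
    Integrable (fun ω => exp ((c' - c) * Y ω)) μ ∧ mgf Y μ (c' - c) = exp (β' - β) := by
  refine integrable_exp_mul_and_mgf_eq_of_lintegral hY.aemeasurable (exp_pos _).le ?_
  rw [← lintegral_map (f := fun y => ENNReal.ofReal (exp ((c' - c) * y))) (by fun_prop) hY, hlaw,
    lintegral_exp_mul_withDensity_eq ν hq, hmass, mul_one]

lemma integrable_exp_mul_mul_of_mem_Icc [IsFiniteMeasure μ] {X : Ω → ℝ} {t w : ℝ}
    (hw : w ∈ Icc 0 1) (hint : Integrable (fun ω => exp (t * X ω)) μ) :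
    Integrable (fun ω => exp (w * t * X ω)) μ := by
  rcases le_total 0 t with ht | ht
  · exact integrable_exp_mul_of_nonneg_of_le hint (mul_nonneg hw.1 ht)
      (mul_le_of_le_one_left ht hw.2)
  · exact integrable_exp_mul_of_nonpos_of_ge hint (mul_nonpos_of_nonneg_of_nonpos hw.1 ht)
      (by nlinarith [hw.2])

/-- Jensen's inequality for the concave function `x ↦ x ^ w`. -/
lemma mgf_mul_le_mgf_rpow [IsProbabilityMeasure μ] {X : Ω → ℝ} {t w : ℝ} (hw : w ∈ Icc 0 1)
    (hint : Integrable (fun ω => exp (t * X ω)) μ) : mgf X μ (w * t) ≤ mgf X μ t ^ w := by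
  have hrpow : ∀ ω, exp (t * X ω) ^ w = exp (w * t * X ω) := fun ω => by
    rw [← exp_mul]; ring_nf
  have := (concaveOn_rpow hw.1 hw.2).le_map_integral (μ := μ)
    (continuous_rpow_const hw.1).continuousOn
    isClosed_Ici (ae_of_all _ fun ω => (exp_pos (t * X ω)).le) hint
    (by simpa only [Function.comp_def, hrpow] using integrable_exp_mul_mul_of_mem_Icc hw hint)
  simpa only [mgf, hrpow] using this

lemma mgf_weightedSum_le [IsProbabilityMeasure μ] [Fintype ι] {Y : ι → Ω → ℝ} {w : ι → ℝ}
    {t L : ℝ} (hY : ∀ i, Measurable (Y i)) (hindep : iIndepFun Y μ) (hw : ∀ i, w i ∈ Icc 0 1)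
    (hint : ∀ i, Integrable (fun ω => exp (t * Y i ω)) μ) (hmgf : ∀ i, mgf (Y i) μ t ≤ exp L) :
    Integrable (fun ω => exp (t * ∑ i, w i * Y i ω)) μ ∧
      mgf (fun ω => ∑ i, w i * Y i ω) μ t ≤ exp ((∑ i, w i) * L) := by
  set X : ι → Ω → ℝ := fun i ω => w i * Y i ω
  have hX : ∀ i, Measurable (X i) := fun i => (hY i).const_mul _
  have hXindep : iIndepFun X μ := hindep.comp (fun i x => w i * x) fun i => measurable_const_mul _
  have hsum : (fun ω => ∑ i, w i * Y i ω) = ∑ i, X i := by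
    ext ω; simp [X, Finset.sum_apply]
  constructor
  · refine (hXindep.integrable_exp_mul_sum (t := t) (s := .univ) hX fun i _ => ?_).congr
      (ae_of_all _ fun ω => by simp only [X, Finset.sum_apply])
    simpa only [X, mul_left_comm t, ← mul_assoc] using
      integrable_exp_mul_mul_of_mem_Icc (hw i) (hint i)
  · rw [hsum, hXindep.mgf_sum hX, Finset.sum_mul, exp_sum]
    refine Finset.prod_le_prod (fun i _ => mgf_nonneg) fun i _ => ?_
    calc mgf (X i) μ t = mgf (Y i) μ (w i * t) := mgf_const_mul _
      _ ≤ mgf (Y i) μ t ^ w i := mgf_mul_le_mgf_rpow (hw i) (hint i)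
      _ ≤ exp L ^ w i := rpow_le_rpow mgf_nonneg (hmgf i) (hw i).1
      _ = exp (w i * L) := by rw [← exp_mul, mul_comm]

lemma measure_weightedSum_ge_le [IsProbabilityMeasure μ] [Fintype ι] {Y : ι → Ω → ℝ}
    {w : ι → ℝ} {t L : ℝ} (hY : ∀ i, Measurable (Y i)) (hindep : iIndepFun Y μ)
    (hw : ∀ i, w i ∈ Icc 0 1) (ht : 0 ≤ t) (hint : ∀ i, Integrable (fun ω => exp (t * Y i ω)) μ)
    (hmgf : ∀ i, mgf (Y i) μ t ≤ exp L) (ε : ℝ) :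
    μ {ω | ε ≤ ∑ i, w i * Y i ω} ≤ ENNReal.ofReal (exp (-t * ε + (∑ i, w i) * L)) := by
  obtain ⟨hSint, hSmgf⟩ := mgf_weightedSum_le hY hindep hw hint hmgf
  refine (ENNReal.le_ofReal_iff_toReal_le (measure_ne_top _ _) (exp_pos _).le).2 ?_
  refine (measure_ge_le_exp_mul_mgf ε ht hSint).trans ?_
  rw [exp_add]
  gcongr

lemma measure_weightedSum_le_le [IsProbabilityMeasure μ] [Fintype ι] {Y : ι → Ω → ℝ}
    {w : ι → ℝ} {t L : ℝ} (hY : ∀ i, Measurable (Y i)) (hindep : iIndepFun Y μ)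
    (hw : ∀ i, w i ∈ Icc 0 1) (ht : t ≤ 0) (hint : ∀ i, Integrable (fun ω => exp (t * Y i ω)) μ)
    (hmgf : ∀ i, mgf (Y i) μ t ≤ exp L) (ε : ℝ) :
    μ {ω | ∑ i, w i * Y i ω ≤ ε} ≤ ENNReal.ofReal (exp (-t * ε + (∑ i, w i) * L)) := by
  obtain ⟨hSint, hSmgf⟩ := mgf_weightedSum_le hY hindep hw hint hmgf
  refine (ENNReal.le_ofReal_iff_toReal_le (measure_ne_top _ _) (exp_pos _).le).2 ?_
  refine (measure_le_le_exp_mul_mgf ε ht hSint).trans ?_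
  rw [exp_add]
  gcongr

lemma measure_weightedMean_ge_le [IsProbabilityMeasure μ] [Fintype ι] {Y : ι → Ω → ℝ}
    {w : ι → ℝ} {B C : ℝ → ℝ} {u b : ℝ} (hY : ∀ i, Measurable (Y i)) (hindep : iIndepFun Y μ)
    (hw : ∀ i, w i ∈ Icc 0 1) (hpos : 0 < ∑ i, w i) (hCbu : C b ≤ C u)
    (hint : ∀ i, Integrable (fun ω => exp ((C u - C b) * Y i ω)) μ)
    (hmgf : ∀ i, mgf (Y i) μ (C u - C b) ≤ exp (B u - B b)) :
    μ {ω | u ≤ (∑ i, w i * Y i ω) / ∑ i, w i} ≤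
      ENNReal.ofReal (exp (-((∑ i, w i) * expFamilyKL B C u b))) := by
  simp_rw [le_div_iff₀ hpos]
  refine (measure_weightedSum_ge_le hY hindep hw (sub_nonneg.2 hCbu) hint hmgf _).trans_eq ?_
  rw [expFamilyKL]
  ring_nf

lemma measure_weightedMean_le_le [IsProbabilityMeasure μ] [Fintype ι] {Y : ι → Ω → ℝ}
    {w : ι → ℝ} {B C : ℝ → ℝ} {u b : ℝ} (hY : ∀ i, Measurable (Y i)) (hindep : iIndepFun Y μ)
    (hw : ∀ i, w i ∈ Icc 0 1) (hpos : 0 < ∑ i, w i) (hCub : C u ≤ C b)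
    (hint : ∀ i, Integrable (fun ω => exp ((C u - C b) * Y i ω)) μ)
    (hmgf : ∀ i, mgf (Y i) μ (C u - C b) ≤ exp (B u - B b)) :
    μ {ω | (∑ i, w i * Y i ω) / ∑ i, w i ≤ u} ≤
      ENNReal.ofReal (exp (-((∑ i, w i) * expFamilyKL B C u b))) := by
  simp_rw [div_le_iff₀ hpos]
  refine (measure_weightedSum_le_le hY hindep hw (sub_nonpos.2 hCub) hint hmgf _).trans_eq ?_
  rw [expFamilyKL]
  ring_nf

variable {T : Ω → ℝ} {f : ℝ → ℝ} {a b x : ℝ}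

lemma measure_lt_comp_le_of_monotoneOn (hab : a ≤ b) (hf : ContinuousOn f (Icc a b))
    (hmono : MonotoneOn f (Icc a b)) (hfa : f a ≤ x)
    (htail : ∀ u ∈ Icc a b, μ {ω | u ≤ T ω} ≤ ENNReal.ofReal (exp (-f u))) :
    μ {ω | T ω ∈ Icc a b ∧ x < f (T ω)} ≤ ENNReal.ofReal (exp (-x)) := by
  rcases le_or_gt (f b) x with hfb | hfb
  · have hempty : {ω | T ω ∈ Icc a b ∧ x < f (T ω)} = ∅ :=
      eq_empty_of_forall_notMem fun ω ⟨hT, hlt⟩ =>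
        (hlt.trans_le ((hmono hT ⟨hab, le_rfl⟩ hT.2).trans hfb)).false
    simp only [hempty, measure_empty, zero_le]
  · obtain ⟨u, hu, rfl⟩ := intermediate_value_Icc hab hf ⟨hfa, hfb.le⟩
    exact (measure_mono fun ω hω => (hmono.reflect_lt hu hω.1 hω.2).le).trans (htail u hu)

lemma measure_lt_comp_le_of_antitoneOn (hab : a ≤ b) (hf : ContinuousOn f (Icc a b))
    (hanti : AntitoneOn f (Icc a b)) (hfb : f b ≤ x)
    (htail : ∀ u ∈ Icc a b, μ {ω | T ω ≤ u} ≤ ENNReal.ofReal (exp (-f u))) :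
    μ {ω | T ω ∈ Icc a b ∧ x < f (T ω)} ≤ ENNReal.ofReal (exp (-x)) := by
  rcases le_or_gt (f a) x with hfa | hfa
  · have hempty : {ω | T ω ∈ Icc a b ∧ x < f (T ω)} = ∅ :=
      eq_empty_of_forall_notMem fun ω ⟨hT, hlt⟩ =>
        (hlt.trans_le ((hanti ⟨le_rfl, hab⟩ hT hT.1).trans hfa)).false
    simp only [hempty, measure_empty, zero_le]
  · obtain ⟨u, hu, rfl⟩ := intermediate_value_Icc' hab hf ⟨hfb, hfa.le⟩
    exact (measure_mono fun ω hω => (hanti.reflect_lt hu hω.1 hω.2).le).trans (htail u hu)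

lemma measure_lt_comp_le_two_mul_exp {m c M : ℝ} (hmc : m ≤ c) (hcM : c ≤ M)
    (hT : ∀ᵐ ω ∂μ, T ω ∈ Icc m M) (hf : ContinuousOn f (Icc m M))
    (hanti : AntitoneOn f (Icc m c)) (hmono : MonotoneOn f (Icc c M)) (hfc : f c ≤ x)
    (hlow : ∀ u ∈ Icc m c, μ {ω | T ω ≤ u} ≤ ENNReal.ofReal (exp (-f u)))
    (hup : ∀ u ∈ Icc c M, μ {ω | u ≤ T ω} ≤ ENNReal.ofReal (exp (-f u))) :
    μ {ω | x < f (T ω)} ≤ ENNReal.ofReal (2 * exp (-x)) := by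
  have hsplit : {ω | x < f (T ω)} ≤ᵐ[μ]
      ({ω | T ω ∈ Icc m c ∧ x < f (T ω)} ∪ {ω | T ω ∈ Icc c M ∧ x < f (T ω)} : Set Ω) := by
    filter_upwards [hT] with ω hω hlt
    rcases le_total (T ω) c with h | h
    · exact Or.inl ⟨⟨hω.1, h⟩, hlt⟩
    · exact Or.inr ⟨⟨h, hω.2⟩, hlt⟩
  calc μ {ω | x < f (T ω)} ≤ _ := measure_mono_ae hsplit
    _ ≤ _ := measure_union_le _ _
    _ ≤ ENNReal.ofReal (exp (-x)) + ENNReal.ofReal (exp (-x)) := by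
      gcongr
      · exact measure_lt_comp_le_of_antitoneOn hmc (hf.mono (Icc_subset_Icc_right hcM)) hanti hfc
          hlow
      · exact measure_lt_comp_le_of_monotoneOn hcM (hf.mono (Icc_subset_Icc_left hmc)) hmono hfc hup
    _ = ENNReal.ofReal (2 * exp (-x)) := by
      rw [← ENNReal.ofReal_add (exp_pos _).le (exp_pos _).le, two_mul]

lemma measure_lt_mul_expFamilyKL_le {B C C' : ℝ → ℝ} {m M b κ : ℝ}
    (hC : ∀ a ∈ Icc m M, HasDerivAt C (C' a) a) (hB : ∀ a ∈ Icc m M, HasDerivAt B (a * C' a) a)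
    (hCpos : ∀ a ∈ Icc m M, 0 < C' a) (hb : b ∈ Icc m M) (hκ : 0 ≤ κ)
    (hT : ∀ᵐ ω ∂μ, T ω ∈ Icc m M)
    (hlow : ∀ u ∈ Icc m b, μ {ω | T ω ≤ u} ≤ ENNReal.ofReal (exp (-(κ * expFamilyKL B C u b))))
    (hup : ∀ u ∈ Icc b M, μ {ω | u ≤ T ω} ≤ ENNReal.ofReal (exp (-(κ * expFamilyKL B C u b))))
    (hx : 0 ≤ x) :
    μ {ω | x < κ * expFamilyKL B C (T ω) b} ≤ ENNReal.ofReal (2 * exp (-x)) := by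
  have hscale := monotone_mul_left_of_nonneg hκ
  refine measure_lt_comp_le_two_mul_exp (f := fun a => κ * expFamilyKL B C a b) hb.1 hb.2 hT
    (continuousOn_const.mul (continuousOn_expFamilyKL hC hB)) ?_ ?_
    (by simpa [expFamilyKL_self] using hx) hlow hup
  · exact hscale.comp_antitoneOn ((antitoneOn_expFamilyKL (convex_Icc m M) hC hB hCpos hb).mono
      fun a ha => ⟨Icc_subset_Icc_right hb.2 ha, ha.2⟩)
  · exact hscale.comp_monotoneOn ((monotoneOn_expFamilyKL (convex_Icc m M) hC hB hCpos hb).mono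
      fun a ha => ⟨Icc_subset_Icc_left hb.1 ha, ha.1⟩)

lemma lintegral_rpow_le_of_measure_lt_le {X : Ω → ℝ} {c r : ℝ} (hX : 0 ≤ᵐ[μ] X)
    (hXm : AEMeasurable X μ) (hc : 0 ≤ c) (hr : 0 < r)
    (htail : ∀ x > 0, μ {ω | x < X ω} ≤ ENNReal.ofReal (c * exp (-x))) :
    ∫⁻ ω, ENNReal.ofReal (X ω ^ r) ∂μ ≤ ENNReal.ofReal (c * r * Gamma r) := by
  have hint : IntegrableOn (fun t => c * (exp (-t) * t ^ (r - 1))) (Ioi 0) :=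
    (GammaIntegral_convergent hr).const_mul c
  have hnn : 0 ≤ᵐ[volume.restrict (Ioi 0)] fun t : ℝ => c * (exp (-t) * t ^ (r - 1)) :=
    (ae_restrict_iff' measurableSet_Ioi).2 (ae_of_all _ fun t (ht : 0 < t) => by positivity)
  rw [lintegral_rpow_eq_lintegral_meas_lt_mul μ hX hXm hr]
  calc ENNReal.ofReal r * ∫⁻ t in Ioi 0, μ {ω | t < X ω} * ENNReal.ofReal (t ^ (r - 1))
      ≤ ENNReal.ofReal r * ∫⁻ t in Ioi 0, ENNReal.ofReal (c * (exp (-t) * t ^ (r - 1))) := by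
        gcongr 1
        refine setLIntegral_mono' measurableSet_Ioi fun t ht => ?_
        rw [← mul_assoc, ENNReal.ofReal_mul (by positivity)]
        exact mul_le_mul_left (htail t ht) _
    _ = ENNReal.ofReal (c * r * Gamma r) := by
        rw [← ofReal_integral_eq_lintegral_ofReal hint hnn, integral_const_mul,
          ← Gamma_eq_integral hr, ← ENNReal.ofReal_mul hr.le]
        ring_nf

lemma ContinuousOn.aemeasurable_comp_of_ae_mem {s : Set ℝ} (hf : ContinuousOn f s)
    (hs : MeasurableSet s) (hT : Measurable T) (hTs : ∀ᵐ ω ∂μ, T ω ∈ s) :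
    AEMeasurable (fun ω => f (T ω)) μ := by
  classical
  refine ⟨fun ω => s.piecewise f 0 (T ω),
    (hf.measurable_piecewise continuousOn_const hs).comp hT, ?_⟩
  filter_upwards [hTs] with ω hω
  simp [hω]

end Probability

theorem param_power_risk_bound_general
    (Θ : Set ℝ) (hΘcomp : IsCompact Θ) (hΘconv : Convex ℝ Θ)
    (ν : Measure ℝ)
    (q : ℝ → ℝ) (hq : Measurable q)
    (B C B' C' : ℝ → ℝ)
    (hC : ∀ a ∈ Θ, HasDerivAt C (C' a) a)
    (hB : ∀ a ∈ Θ, HasDerivAt B (B' a) a)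
    (hCpos : ∀ a ∈ Θ, 0 < C' a)
    (hBeq : ∀ a ∈ Θ, B' a = a * C' a)
    (p : ℝ → ℝ → ℝ) (hp : ∀ y a, p y a = q y * Real.exp (y * C a - B a))
    (Pθ : ℝ → Measure ℝ)
    (hPθ : ∀ a ∈ Θ, Pθ a = ν.withDensity (fun y => ENNReal.ofReal (p y a)))
    (hPθprob : ∀ a ∈ Θ, IsProbabilityMeasure (Pθ a))
    (K : ℝ → ℝ → ℝ)
    (hK : ∀ a b, K a b = a * (C a - C b) - B a + B b)
    {Ω : Type*} [MeasurableSpace Ω] (P : Measure Ω) [IsProbabilityMeasure P]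
    (n : ℕ) (w : Fin n → ℝ) (hw : ∀ i, w i ∈ Set.Icc (0 : ℝ) 1)
    (N : ℝ) (hN : N = ∑ i, w i) (hNpos : 0 < N)
    (θstar : ℝ) (hθstar : θstar ∈ Θ)
    (Y : Fin n → Ω → ℝ) (hYmeas : ∀ i, Measurable (Y i))
    (hYindep : iIndepFun Y P)
    (hYlaw : ∀ i, Measure.map (Y i) P = Pθ θstar)
    (θt : Ω → ℝ) (hθt : ∀ ω, θt ω = (∑ i, w i * Y i ω) / N)
    (hθtΘ : ∀ᵐ ω ∂P, θt ω ∈ Θ) :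
    ∀ r : ℝ, 0 < r →
      ∫⁻ ω, ENNReal.ofReal ((N * K (θt ω) θstar) ^ r) ∂P
        ≤ ENNReal.ofReal (2 * r * Real.Gamma r) := by
  intro r hr
  obtain ⟨m, M, rfl⟩ : ∃ m M, Θ = Icc m M :=
    ⟨_, _, eq_Icc_of_connected_compact (hΘconv.isConnected ⟨θstar, hθstar⟩) hΘcomp⟩
  obtain rfl : K = expFamilyKL B C := funext₂ hK
  obtain rfl : p = fun y a => q y * exp (y * C a - B a) := funext₂ hp
  obtain rfl : θt = fun ω => (∑ i, w i * Y i ω) / N := funext hθt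
  subst hN
  have hB' : ∀ a ∈ Icc m M, HasDerivAt B (a * C' a) a := fun a ha => hBeq a ha ▸ hB a ha
  have hCmono : MonotoneOn C (Icc m M) :=
    monotoneOn_of_forall_hasDerivAt_nonneg (convex_Icc m M) hC fun a ha => (hCpos a ha).le
  have hmgf : ∀ u ∈ Icc m M, ∀ i, Integrable (fun ω => exp ((C u - C θstar) * Y i ω)) P ∧
      mgf (Y i) P (C u - C θstar) = exp (B u - B θstar) := fun u hu i =>
    integrable_exp_mul_and_mgf_eq_of_map_eq_withDensity hq (hYmeas i)
      ((hYlaw i).trans (hPθ θstar hθstar)) (by simpa [hPθ u hu] using (hPθprob u hu).measure_univ)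
  have hup : ∀ u ∈ Icc θstar M, P {ω | u ≤ (∑ i, w i * Y i ω) / ∑ i, w i} ≤
      ENNReal.ofReal (exp (-((∑ i, w i) * expFamilyKL B C u θstar))) := fun u hu =>
    have hu' := Icc_subset_Icc_left hθstar.1 hu
    measure_weightedMean_ge_le hYmeas hYindep hw hNpos (hCmono hθstar hu' hu.1)
      (fun i => (hmgf u hu' i).1) fun i => (hmgf u hu' i).2.le
  have hlow : ∀ u ∈ Icc m θstar, P {ω | (∑ i, w i * Y i ω) / ∑ i, w i ≤ u} ≤
      ENNReal.ofReal (exp (-((∑ i, w i) * expFamilyKL B C u θstar))) := fun u hu =>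
    have hu' := Icc_subset_Icc_right hθstar.2 hu
    measure_weightedMean_le_le hYmeas hYindep hw hNpos (hCmono hu' hθstar hu.2)
      (fun i => (hmgf u hu' i).1) fun i => (hmgf u hu' i).2.le
  refine lintegral_rpow_le_of_measure_lt_le ?_
    ((continuousOn_const.mul (continuousOn_expFamilyKL hC hB')).aemeasurable_comp_of_ae_mem
      measurableSet_Icc (by fun_prop) hθtΘ) zero_le_two hr fun x hx =>
    measure_lt_mul_expFamilyKL_le hC hB' hCpos hθstar hNpos.le hθtΘ hlow hup hx.le
  filter_upwards [hθtΘ] with ω hω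
  exact mul_nonneg hNpos.le (expFamilyKL_nonneg (convex_Icc m M) hC hB' hCpos hω hθstar)

/-- polynomial risk bound in the parametric situation
(first part of Theorem 2.4). -/
theorem param_power_risk_bound
    (Θ : Set ℝ) (hΘcomp : IsCompact Θ) (hΘconv : Convex ℝ Θ)
    (ν : Measure ℝ) [SigmaFinite ν]
    (q : ℝ → ℝ) (hq : Measurable q) (hqnn : ∀ y, 0 ≤ q y)
    (B C B' C' : ℝ → ℝ)
    (hC : ∀ a ∈ Θ, HasDerivAt C (C' a) a)
    (hB : ∀ a ∈ Θ, HasDerivAt B (B' a) a)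
    (hCcont : ContinuousOn C' Θ) (hBcont : ContinuousOn B' Θ)
    (hCpos : ∀ a ∈ Θ, 0 < C' a)
    (hBeq : ∀ a ∈ Θ, B' a = a * C' a)
    (p : ℝ → ℝ → ℝ) (hp : ∀ y a, p y a = q y * Real.exp (y * C a - B a))
    (Pθ : ℝ → Measure ℝ)
    (hPθ : ∀ a ∈ Θ, Pθ a = ν.withDensity (fun y => ENNReal.ofReal (p y a)))
    (hPθprob : ∀ a ∈ Θ, IsProbabilityMeasure (Pθ a))
    (K : ℝ → ℝ → ℝ)
    (hK : ∀ a b, K a b = a * (C a - C b) - B a + B b)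
    {Ω : Type*} [MeasurableSpace Ω] (P : Measure Ω) [IsProbabilityMeasure P]
    (n : ℕ) (w : Fin n → ℝ) (hw : ∀ i, w i ∈ Set.Icc (0 : ℝ) 1)
    (N : ℝ) (hN : N = ∑ i, w i) (hNpos : 0 < N)
    (θstar : ℝ) (hθstar : θstar ∈ Θ)
    (Y : Fin n → Ω → ℝ) (hYmeas : ∀ i, Measurable (Y i))
    (hYindep : iIndepFun Y P)
    (hYlaw : ∀ i, Measure.map (Y i) P = Pθ θstar)
    (θt : Ω → ℝ) (hθt : ∀ ω, θt ω = (∑ i, w i * Y i ω) / N)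
    (hθtΘ : ∀ᵐ ω ∂P, θt ω ∈ Θ) :
    ∀ r : ℝ, 0 < r →
      ∫⁻ ω, ENNReal.ofReal ((N * K (θt ω) θstar) ^ r) ∂P
        ≤ ENNReal.ofReal (2 * r * Real.Gamma r) :=
  param_power_risk_bound_general Θ hΘcomp hΘconv ν q hq B C B' C' hC hB hCpos hBeq p hp Pθ hPθ
    hPθprob K hK P n w hw N hN hNpos θstar hθstar Y hYmeas hYindep hYlaw θt hθt hθtΘ
end

section
/- Let ζ be a nonnegative random variable with E[e^ζ] < ∞. Then for every r > 0, E[ζ^r] ≤ (log(E[e^ζ] + c_r))^r, where c_r := e^{max(r−1,0)}. -/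
/-!
Since `ζ ≤ log (e^ζ + c)`, it suffices to bound `E[φ (e^ζ)]` for `φ x = (log (x + c))^r`.
The function `y ↦ (log y)^r` has second derivative `r (log y)^(r-2) (r - 1 - log y) / y²`,
so it is concave on `y ≥ e^{max(r-1,0)} = c`; hence `φ` is concave on `[0, ∞)` and Jensen's
inequality gives `E[φ (e^ζ)] ≤ φ (E[e^ζ])`. Integrability of `φ (e^ζ)` comes from
`(log y)^r ≤ r^r y`.
-/

open MeasureTheory Real Set

namespace Real

variable {r : ℝ}

lemma log_rpow_le_rpow_mul (hr : 0 < r) {y : ℝ} (hy : 1 ≤ y) : log y ^ r ≤ r ^ r * y := by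
  have hy0 : 0 ≤ y := zero_le_one.trans hy
  calc log y ^ r ≤ (y ^ r⁻¹ / r⁻¹) ^ r :=
        rpow_le_rpow (log_nonneg hy) (log_le_rpow_div hy0 (inv_pos.2 hr)) hr.le
    _ = r ^ r * y := by
        rw [div_inv_eq_mul, mul_comm, mul_rpow hr.le (by positivity), rpow_inv_rpow hy0 hr.ne']

lemma continuousOn_log_rpow (hr : 0 ≤ r) : ContinuousOn (fun y => log y ^ r) (Ioi 0) :=
  fun _ hy => (continuousAt_log hy.ne').rpow_const (Or.inr hr) |>.continuousWithinAt

lemma concaveOn_log_rpow (hr : 0 ≤ r) :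
    ConcaveOn ℝ (Ici (exp (max (r - 1) 0))) fun y => log y ^ r := by
  have hpos : ∀ {y}, exp (max (r - 1) 0) < y → 0 < log y := fun hy =>
    (lt_log_iff_exp_lt ((exp_pos _).trans hy)).2 ((exp_le_exp.2 (le_max_right _ _)).trans_lt hy)
  refine concaveOn_of_hasDerivWithinAt2_nonpos (convex_Ici _)
    ((continuousOn_log_rpow hr).mono fun y hy => (exp_pos _).trans_le hy)
    (f' := fun y => r * log y ^ (r - 1) / y)
    (f'' := fun y => r * log y ^ (r - 1) * (r - 1 - log y) / (log y * y ^ 2)) ?_ ?_ ?_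
  all_goals
    rw [interior_Ici]
    intro y hy
    have hL := hpos hy
    have hy0 : 0 < y := (exp_pos _).trans hy
  · exact ((hasDerivAt_log hy0.ne').rpow_const (Or.inl hL.ne')).hasDerivWithinAt.congr_deriv
      (by field_simp)
  · have h := (((hasDerivAt_log hy0.ne').rpow_const (p := r - 1) (Or.inl hL.ne')).const_mul r).div
      (hasDerivAt_id y) hy0.ne'
    refine h.hasDerivWithinAt.congr_deriv ?_
    rw [rpow_sub_one hL.ne' (r - 1)]
    simp only [id]
    field_simp
  · have hrL : r - 1 ≤ log y := (le_max_left _ _).trans ((le_log_iff_exp_le hy0).2 hy.le)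
    exact div_nonpos_of_nonpos_of_nonneg
      (mul_nonpos_of_nonneg_of_nonpos (by positivity) (by linarith)) (by positivity)

end Real

lemma MeasureTheory.Integrable.log_add_rpow {α : Type*} [MeasurableSpace α] {μ : Measure α}
    [IsFiniteMeasure μ] {f : α → ℝ} (hf : Integrable f μ) (hf0 : ∀ᵐ a ∂μ, 0 ≤ f a) {c r : ℝ}
    (hc : 1 ≤ c) (hr : 0 < r) : Integrable (fun a => log (f a + c) ^ r) μ := by
  refine ((hf.add (integrable_const c)).const_mul (r ^ r)).mono' ?_ ?_
  · exact ((measurable_log.pow_const r).comp_aemeasurable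
      (hf.aemeasurable.add_const c)).aestronglyMeasurable
  · filter_upwards [hf0] with a ha
    have h1 : 1 ≤ f a + c := by linarith
    rw [norm_of_nonneg (rpow_nonneg (log_nonneg h1) r)]
    exact log_rpow_le_rpow_mul hr h1

/-- for a nonnegative random variable ζ with E[e^ζ] < ∞,
E[ζ^r] ≤ (log(E[e^ζ] + c_r))^r with c_r = e^{max(r-1,0)}. -/
theorem moment_bound_via_log_exp
    {Ω : Type*} [MeasurableSpace Ω] (P : Measure Ω) [IsProbabilityMeasure P]
    (ζ : Ω → ℝ) (hζnn : ∀ ω, 0 ≤ ζ ω) (hζmeas : Measurable ζ)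
    (hint : Integrable (fun ω => Real.exp (ζ ω)) P)
    (r : ℝ) (hr : 0 < r) :
    ∫ ω, (ζ ω) ^ r ∂P
      ≤ (Real.log ((∫ ω, Real.exp (ζ ω) ∂P) + Real.exp (max (r - 1) 0))) ^ r := by
  set c := exp (max (r - 1) 0)
  have hexp : ∀ ω, 0 ≤ exp (ζ ω) := fun ω => (exp_pos _).le
  have hφ : ConcaveOn ℝ (Ici 0) fun x => log (x + c) ^ r := by
    simpa [Function.comp_def, c] using (concaveOn_log_rpow hr.le).translate_left c
  have hφc : ContinuousOn (fun x => log (x + c) ^ r) (Ici 0) :=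
    (continuousOn_log_rpow hr.le).comp (continuous_add_const c).continuousOn
      fun x (hx : 0 ≤ x) => show 0 < x + c by positivity
  have hφi : Integrable (fun ω => log (exp (ζ ω) + c) ^ r) P :=
    hint.log_add_rpow (.of_forall hexp) (one_le_exp (le_max_right _ _)) hr
  have hpt : ∀ ω, ζ ω ^ r ≤ log (exp (ζ ω) + c) ^ r := fun ω =>
    rpow_le_rpow (hζnn ω) ((le_log_iff_exp_le (by positivity)).2 (le_add_of_nonneg_right
      (exp_pos _).le)) hr.le
  have hζi : Integrable (fun ω => ζ ω ^ r) P :=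
    hφi.mono' (hζmeas.pow_const r).aestronglyMeasurable <| .of_forall fun ω => by
      rw [norm_of_nonneg (rpow_nonneg (hζnn ω) r)]
      exact hpt ω
  calc ∫ ω, ζ ω ^ r ∂P ≤ ∫ ω, log (exp (ζ ω) + c) ^ r ∂P := integral_mono hζi hφi hpt
    _ ≤ _ := hφ.le_map_integral hφc isClosed_Ici (.of_forall hexp) hint hφi
end

section
/- Assume additionally condition (A3): 0 < u_0 ≤ N_{k−1}/N_k ≤ u < 1 for all 2 ≤ k ≤ K. Then for the SSA recursion, for all 1 ≤ k < k' ≤ K, N_k · K(θ̂^{(k')}, θ̂^{(k)}) ≤ κ²·c_u²·z̄_k, where c_u := (u^{−1/2} − 1)^{−1} and z̄_k := max_{k < l ≤ K} z_l. -/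
/-!
For `a, b ∈ Θ`, `K(a, b) = ∫_a^b (u - a) I(u) du` lies between `I(ξ) (b - a)² / 2` at the
minimum and at the maximum of `I` between `a` and `b`, so by the `κ`-comparability of `I` it is
`I(w) (b - a)² / 2` up to a factor `κ²`, for any reference point `w ∈ Θ`. A step of the
recursion moves `θ̂` only when the test `N_l K(θ̃^{(l)}, θ̂^{(l-1)}) < z_l` passes, and then by at
most the distance to `θ̃^{(l)}`; hence `N_l I(w) (θ̂^{(l)} - θ̂^{(l-1)})² ≤ 2 κ² z_l`. Under (A3),
`N_k ≤ u^{l-k} N_l`, so measured in units of `N_k` the steps after `k` decay like `√u^{l-k}`,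
and the geometric series gives `N_k I(w) (θ̂^{(k')} - θ̂^{(k)})² ≤ 2 κ² c_u² z̄_k`. Taking for `w`
the maximiser of `I` between `θ̂^{(k')}` and `θ̂^{(k)}` turns this into the claimed bound on `K`.
-/

open MeasureTheory Real Set

noncomputable def fisherKL (I : ℝ → ℝ) (a b : ℝ) : ℝ := ∫ u in a..b, (u - a) * I u

theorem integral_sub_mul_nonneg {g : ℝ → ℝ} {a b : ℝ} (hg : ∀ x ∈ uIcc a b, 0 ≤ g x) :
    0 ≤ ∫ x in a..b, (x - a) * g x := by
  rcases le_total a b with hab | hba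
  · refine intervalIntegral.integral_nonneg hab fun x hx => ?_
    exact mul_nonneg (by linarith [hx.1]) (hg x (Icc_subset_uIcc hx))
  · rw [intervalIntegral.integral_symm, ← intervalIntegral.integral_neg]
    refine intervalIntegral.integral_nonneg hba fun x hx => ?_
    have := hg x (Icc_subset_uIcc' hx)
    nlinarith [hx.2]

theorem integral_sub_mul_const (a b c : ℝ) : ∫ x in a..b, (x - a) * c = c * (b - a) ^ 2 / 2 := by
  rw [intervalIntegral.integral_mul_const, intervalIntegral.integral_sub
    intervalIntegral.intervalIntegrable_id intervalIntegrable_const, integral_id,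
    intervalIntegral.integral_const, smul_eq_mul]
  ring

theorem le_sq_mul_of_sqrt_div_le {x y κ : ℝ} (hy : 0 < y) (h : √(x / y) ≤ κ) : x ≤ κ ^ 2 * y :=
  (div_le_iff₀ hy).1 (sqrt_le_iff.1 h).2

section fisherKL

variable {Θ : Set ℝ} {I : ℝ → ℝ} {κ a b m M w : ℝ}

theorem intervalIntegrable_sub_mul (hI : ContinuousOn I (uIcc a b)) :
    IntervalIntegrable (fun x => (x - a) * I x) volume a b :=
  ((continuousOn_id.sub continuousOn_const).mul hI).intervalIntegrable

theorem fisherKL_nonneg (hI : ∀ x ∈ uIcc a b, 0 ≤ I x) : 0 ≤ fisherKL I a b :=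
  integral_sub_mul_nonneg hI

theorem fisherKL_le (hI : ContinuousOn I (uIcc a b)) (hM : ∀ x ∈ uIcc a b, I x ≤ M) :
    fisherKL I a b ≤ M * (b - a) ^ 2 / 2 := by
  have := integral_sub_mul_nonneg (g := fun x => M - I x) (fun x hx => sub_nonneg.2 (hM x hx))
  simp only [mul_sub] at this
  rw [intervalIntegral.integral_sub
    (intervalIntegrable_sub_mul (I := fun _ => M) continuousOn_const)
    (intervalIntegrable_sub_mul hI), integral_sub_mul_const] at this
  rw [fisherKL]
  linarith

theorem le_fisherKL (hI : ContinuousOn I (uIcc a b)) (hm : ∀ x ∈ uIcc a b, m ≤ I x) :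
    m * (b - a) ^ 2 / 2 ≤ fisherKL I a b := by
  have := integral_sub_mul_nonneg (g := fun x => I x - m) (fun x hx => sub_nonneg.2 (hm x hx))
  simp only [mul_sub] at this
  rw [intervalIntegral.integral_sub (intervalIntegrable_sub_mul hI)
    (intervalIntegrable_sub_mul (I := fun _ => m) continuousOn_const),
    integral_sub_mul_const] at this
  rw [fisherKL]
  linarith

theorem exists_fisherKL_le (hI : ContinuousOn I (uIcc a b)) :
    ∃ ξ ∈ uIcc a b, fisherKL I a b ≤ I ξ * (b - a) ^ 2 / 2 := by
  obtain ⟨ξ, hξ, hmax⟩ := isCompact_uIcc.exists_isMaxOn nonempty_uIcc hI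
  exact ⟨ξ, hξ, fisherKL_le hI fun x hx => hmax hx⟩

theorem exists_le_fisherKL (hI : ContinuousOn I (uIcc a b)) :
    ∃ ξ ∈ uIcc a b, I ξ * (b - a) ^ 2 / 2 ≤ fisherKL I a b := by
  obtain ⟨ξ, hξ, hmin⟩ := isCompact_uIcc.exists_isMinOn nonempty_uIcc hI
  exact ⟨ξ, hξ, le_fisherKL hI fun x hx => hmin hx⟩

theorem mul_sq_le_fisherKL (hΘ : Convex ℝ Θ) (hIcont : ContinuousOn I Θ)
    (hIκ : ∀ u ∈ Θ, ∀ v ∈ Θ, I u ≤ κ ^ 2 * I v) (ha : a ∈ Θ) (hb : b ∈ Θ) (hw : w ∈ Θ) :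
    I w * (b - a) ^ 2 / 2 ≤ κ ^ 2 * fisherKL I a b := by
  have hsub : uIcc a b ⊆ Θ := hΘ.ordConnected.uIcc_subset ha hb
  obtain ⟨ξ, hξ, hle⟩ := exists_le_fisherKL (hIcont.mono hsub)
  calc I w * (b - a) ^ 2 / 2 ≤ κ ^ 2 * I ξ * (b - a) ^ 2 / 2 := by
        gcongr; exact hIκ w hw ξ (hsub hξ)
    _ ≤ κ ^ 2 * fisherKL I a b := by rw [mul_assoc, mul_div_assoc]; gcongr

end fisherKL

theorem le_pow_mul_of_le_mul_succ {N : ℕ → ℝ} {u : ℝ} (hu : 0 ≤ u) {k n : ℕ}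
    (h : ∀ i < n, N (k + i) ≤ u * N (k + i + 1)) : N k ≤ u ^ n * N (k + n) := by
  induction n with
  | zero => simp
  | succ n ih =>
    calc N k ≤ u ^ n * N (k + n) := ih fun i hi => h i (by omega)
      _ ≤ u ^ n * (u * N (k + n + 1)) := by gcongr; exact h n (by omega)
      _ = u ^ (n + 1) * N (k + (n + 1)) := by ring_nf

theorem abs_sub_le_of_abs_sub_succ_le_geom {x : ℕ → ℝ} {C r : ℝ} (hC : 0 ≤ C) (hr0 : 0 ≤ r)
    (hr1 : r < 1) {n : ℕ} (h : ∀ j < n, |x (j + 1) - x j| ≤ C * r ^ (j + 1)) :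
    |x n - x 0| ≤ C * (r / (1 - r)) := by
  have hdist := dist_le_range_sum_of_dist_le (f := x) n (d := fun j => C * r ^ (j + 1))
    fun hj => by rw [dist_comm, Real.dist_eq]; exact h _ hj
  rw [dist_comm, Real.dist_eq, ← Finset.mul_sum] at hdist
  refine hdist.trans (mul_le_mul_of_nonneg_left ?_ hC)
  calc ∑ j ∈ Finset.range n, r ^ (j + 1) = r * ∑ j ∈ Finset.Ico 0 n, r ^ j := by
        rw [Finset.range_eq_Ico, Finset.mul_sum]; simp only [pow_succ']
    _ ≤ r * (r ^ 0 / (1 - r)) := by gcongr; exact geom_sum_Ico_le_of_lt_one hr0 hr1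
    _ = r / (1 - r) := by ring

theorem mul_sq_sub_le_of_mul_sq_sub_succ_le {x : ℕ → ℝ} {A B u : ℝ} (hA : 0 ≤ A) (hB : 0 ≤ B)
    (hu0 : 0 < u) (hu1 : u < 1) {n : ℕ}
    (h : ∀ j < n, A * (x (j + 1) - x j) ^ 2 ≤ B * u ^ (j + 1)) :
    A * (x n - x 0) ^ 2 ≤ B * ((1 / √u - 1)⁻¹) ^ 2 := by
  have hs1 : √u < 1 := by simpa using sqrt_lt_sqrt hu0.le hu1
  have hscale : ∀ y, A * y ^ 2 = (√A * y) ^ 2 := fun y => by rw [mul_pow, sq_sqrt hA]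
  have hdisp := abs_sub_le_of_abs_sub_succ_le_geom (x := fun j => √A * x j) (sqrt_nonneg B)
    (sqrt_nonneg u) hs1 (n := n) fun j hj => by
      refine abs_le_of_sq_le_sq ?_ (by positivity)
      rw [← mul_sub, ← hscale, mul_pow, sq_sqrt hB, ← pow_mul, pow_mul', sq_sqrt hu0.le]
      exact h j hj
  -- false at `u = 0`, where `1 / √u` is the junk value `0`
  have hcu : (1 / √u - 1)⁻¹ = √u / (1 - √u) := by
    have := sqrt_pos.2 hu0
    field_simp
  rw [hscale, mul_sub, hcu, ← sq_sqrt hB, ← mul_pow, ← sq_abs]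
  exact pow_le_pow_left₀ (abs_nonneg _) hdisp 2

theorem mul_sq_sub_le_of_increment_le {x N : ℕ → ℝ} {c Z u : ℝ} (hc : 0 ≤ c) (hZ : 0 ≤ Z)
    (hu0 : 0 < u) (hu1 : u < 1) {k n : ℕ} (hNk : 0 ≤ N k)
    (hN : ∀ j < n, N (k + j) ≤ u * N (k + j + 1))
    (hinc : ∀ j < n, N (k + j + 1) * c * (x (k + j + 1) - x (k + j)) ^ 2 ≤ Z) :
    N k * c * (x (k + n) - x k) ^ 2 ≤ Z * ((1 / √u - 1)⁻¹) ^ 2 := by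
  refine mul_sq_sub_le_of_mul_sq_sub_succ_le (x := fun j => x (k + j)) (mul_nonneg hNk hc) hZ
    hu0 hu1 fun j hj => ?_
  have hgrowth : N k ≤ u ^ (j + 1) * N (k + j + 1) :=
    le_pow_mul_of_le_mul_succ hu0.le fun i hi => hN i (by omega)
  calc N k * c * (x (k + j + 1) - x (k + j)) ^ 2
      ≤ u ^ (j + 1) * (N (k + j + 1) * c * (x (k + j + 1) - x (k + j)) ^ 2) := by
        rw [← mul_assoc, ← mul_assoc]; gcongr
    _ ≤ Z * u ^ (j + 1) := by rw [mul_comm]; gcongr; exact hinc j hj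


noncomputable def aggregate (I Kag : ℝ → ℝ) (N z θ' θ : ℝ) : ℝ :=
  Kag (N * fisherKL I θ' θ / z) * θ' + (1 - Kag (N * fisherKL I θ' θ / z)) * θ

section Aggregation

variable {Θ : Set ℝ} {I Kag : ℝ → ℝ} {κ N z θ θ' w : ℝ}

theorem aggregate_weight_mem_Icc (hΘ : Convex ℝ Θ) (hI : ∀ x ∈ Θ, 0 ≤ I x)
    (hKag : ∀ t, 0 ≤ t → Kag t ∈ Icc 0 1) (hN : 0 ≤ N) (hz : 0 ≤ z) (hθ' : θ' ∈ Θ)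
    (hθ : θ ∈ Θ) : Kag (N * fisherKL I θ' θ / z) ∈ Icc 0 1 :=
  hKag _ <| div_nonneg (mul_nonneg hN <| fisherKL_nonneg fun x hx =>
    hI x (hΘ.ordConnected.uIcc_subset hθ' hθ hx)) hz

theorem aggregate_mem (hΘ : Convex ℝ Θ) (hI : ∀ x ∈ Θ, 0 ≤ I x)
    (hKag : ∀ t, 0 ≤ t → Kag t ∈ Icc 0 1) (hN : 0 ≤ N) (hz : 0 ≤ z) (hθ' : θ' ∈ Θ)
    (hθ : θ ∈ Θ) : aggregate I Kag N z θ' θ ∈ Θ := by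
  obtain ⟨hγ0, hγ1⟩ := aggregate_weight_mem_Icc hΘ hI hKag hN hz hθ' hθ
  exact hΘ hθ' hθ hγ0 (sub_nonneg.2 hγ1) (add_sub_cancel _ _)

theorem mul_sq_aggregate_sub_le (hΘ : Convex ℝ Θ) (hIcont : ContinuousOn I Θ)
    (hI : ∀ x ∈ Θ, 0 ≤ I x) (hIκ : ∀ u ∈ Θ, ∀ v ∈ Θ, I u ≤ κ ^ 2 * I v)
    (hKag : ∀ t, 0 ≤ t → Kag t ∈ Icc 0 1) (hKag0 : ∀ t, 1 ≤ t → Kag t = 0)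
    (hN : 0 ≤ N) (hz : 0 < z) (hθ' : θ' ∈ Θ) (hθ : θ ∈ Θ) (hw : w ∈ Θ) :
    N * I w * (aggregate I Kag N z θ' θ - θ) ^ 2 ≤ 2 * κ ^ 2 * z := by
  set γ := Kag (N * fisherKL I θ' θ / z)
  obtain ⟨hγ0, hγ1⟩ : γ ∈ Icc 0 1 := aggregate_weight_mem_Icc hΘ hI hKag hN hz.le hθ' hθ
  have hstep : aggregate I Kag N z θ' θ - θ = γ * (θ' - θ) := by unfold aggregate; ring
  rcases eq_or_ne γ 0 with hγ | hγ
  · rw [hstep, hγ, zero_mul, zero_pow two_ne_zero, mul_zero]; positivity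
  -- a nonzero weight is only given to a weak estimate that passes the test
  have htest : N * fisherKL I θ' θ < z := by
    by_contra! h
    exact hγ (hKag0 _ ((one_le_div hz).2 h))
  have hcomp : I w * (θ - θ') ^ 2 ≤ 2 * (κ ^ 2 * fisherKL I θ' θ) := by
    linarith [mul_sq_le_fisherKL hΘ hIcont hIκ hθ' hθ hw]
  have hwI := hI w hw
  calc N * I w * (aggregate I Kag N z θ' θ - θ) ^ 2 = γ ^ 2 * (N * (I w * (θ - θ') ^ 2)) := by
        rw [hstep]; ring
    _ ≤ 1 * (N * (2 * (κ ^ 2 * fisherKL I θ' θ))) := by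
        gcongr ?_ * (N * ?_)
        exact pow_le_one₀ hγ0 hγ1
    _ ≤ 2 * κ ^ 2 * z := by nlinarith [sq_nonneg κ]

theorem aggregate_rec_mem {θtil θhat N z : ℕ → ℝ} {n : ℕ} (hΘ : Convex ℝ Θ)
    (hI : ∀ x ∈ Θ, 0 ≤ I x) (hKag : ∀ t, 0 ≤ t → Kag t ∈ Icc 0 1)
    (hθtil : ∀ k, 1 ≤ k → k ≤ n → θtil k ∈ Θ) (hN : ∀ k, 2 ≤ k → k ≤ n → 0 ≤ N k)
    (hz : ∀ k, 2 ≤ k → k ≤ n → 0 < z k) (h1 : θhat 1 = θtil 1)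
    (hrec : ∀ k, 2 ≤ k → k ≤ n →
      θhat k = aggregate I Kag (N k) (z k) (θtil k) (θhat (k - 1))) :
    ∀ k, 1 ≤ k → k ≤ n → θhat k ∈ Θ := by
  intro k hk
  induction k, hk using Nat.le_induction with
  | base => intro hn; rw [h1]; exact hθtil 1 le_rfl hn
  | succ k hk ih =>
    intro hkn
    rw [hrec (k + 1) (by omega) hkn, Nat.add_sub_cancel]
    exact aggregate_mem hΘ hI hKag (hN _ (by omega) hkn) (hz _ (by omega) hkn).le
      (hθtil _ (by omega) hkn) (ih (by omega))

end Aggregation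

theorem ssa_stability_after_propagation_general
    (Θ : Set ℝ) (hΘconv : Convex ℝ Θ) (κ : ℝ)
    (I : ℝ → ℝ) (hIcont : ContinuousOn I Θ) (hIpos : ∀ u ∈ Θ, 0 < I u)
    (hIκ : ∀ u ∈ Θ, ∀ v ∈ Θ, Real.sqrt (I u / I v) ≤ κ)
    (K : ℝ → ℝ → ℝ) (hK : ∀ a b, K a b = ∫ u in a..b, (u - a) * I u)
    (Kc : ℕ)
    (θtil : ℕ → ℝ) (hθtil : ∀ k, 1 ≤ k → k ≤ Kc → θtil k ∈ Θ)
    (N : ℕ → ℝ) (hN : ∀ k, 1 ≤ k → k ≤ Kc → 0 < N k)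
    (z : ℕ → ℝ) (hz : ∀ k, 2 ≤ k → k ≤ Kc → 0 < z k)
    (Kag : ℝ → ℝ) (hKag01 : ∀ t, 0 ≤ t → Kag t ∈ Set.Icc (0 : ℝ) 1)
    (hKag0 : ∀ t, 1 ≤ t → Kag t = 0)
    (θhat : ℕ → ℝ) (hθhat1 : θhat 1 = θtil 1)
    (hθhatrec : ∀ k, 2 ≤ k → k ≤ Kc →
      θhat k = Kag (N k * K (θtil k) (θhat (k - 1)) / z k) * θtil k
        + (1 - Kag (N k * K (θtil k) (θhat (k - 1)) / z k)) * θhat (k - 1))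
    (u₀ u : ℝ) (hu : u < 1)
    (hA3 : ∀ k, 2 ≤ k → k ≤ Kc →
      u₀ ≤ N (k - 1) / N k ∧ N (k - 1) / N k ≤ u) :
    ∀ k k' : ℕ, 1 ≤ k → k < k' → k' ≤ Kc →
      N k * K (θhat k') (θhat k)
        ≤ κ ^ 2 * ((1 / Real.sqrt u - 1)⁻¹) ^ 2 * sSup (z '' {l | k < l ∧ l ≤ Kc}) := by
  obtain rfl : K = fisherKL I := funext₂ hK
  have hI : ∀ x ∈ Θ, 0 ≤ I x := fun x hx => (hIpos x hx).le
  have hIκ' : ∀ u ∈ Θ, ∀ v ∈ Θ, I u ≤ κ ^ 2 * I v := fun u hu v hv =>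
    le_sq_mul_of_sqrt_div_le (hIpos v hv) (hIκ u hu v hv)
  have hrec : ∀ k, 2 ≤ k → k ≤ Kc →
      θhat k = aggregate I Kag (N k) (z k) (θtil k) (θhat (k - 1)) := hθhatrec
  have hmem := aggregate_rec_mem hΘconv hI hKag01 hθtil (fun k hk hkn => (hN k (by omega) hkn).le)
    hz hθhat1 hrec
  intro k k' hk hkk' hk'
  obtain ⟨n, rfl⟩ := Nat.exists_eq_add_of_le hkk'.le
  set Z := sSup (z '' {l | k < l ∧ l ≤ Kc})
  have hzZ : ∀ l, k < l → l ≤ Kc → z l ≤ Z := fun l hkl hl =>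
    le_csSup ((finite_Ioc k Kc).image z).bddAbove ⟨l, ⟨hkl, hl⟩, rfl⟩
  have hZ : 0 ≤ Z := (hz _ (by omega) hk').le.trans (hzZ _ hkk' hk')
  have hNk : 0 < N k := hN k hk (by omega)
  have hgrowth : ∀ j < n, N (k + j) ≤ u * N (k + j + 1) := fun j hj =>
    (div_le_iff₀ (hN _ (by omega) (by omega))).1 (hA3 (k + j + 1) (by omega) (by omega)).2
  have hu0 : 0 < u := pos_of_mul_pos_left (hNk.trans_le (hgrowth 0 (by omega)))
    (hN (k + 1) (by omega) (by omega)).le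
  have hsub := hΘconv.ordConnected.uIcc_subset (hmem _ (by omega) hk') (hmem k hk (by omega))
  obtain ⟨ξ, hξ, hKξ⟩ := exists_fisherKL_le (hIcont.mono hsub)
  have hinc : ∀ j < n,
      N (k + j + 1) * I ξ * (θhat (k + j + 1) - θhat (k + j)) ^ 2 ≤ 2 * κ ^ 2 * Z := by
    intro j hj
    rw [hrec (k + j + 1) (by omega) (by omega), Nat.add_sub_cancel]
    calc _ ≤ 2 * κ ^ 2 * z (k + j + 1) :=
          mul_sq_aggregate_sub_le hΘconv hIcont hI hIκ' hKag01 hKag0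
            (hN _ (by omega) (by omega)).le (hz _ (by omega) (by omega))
            (hθtil _ (by omega) (by omega)) (hmem (k + j) (by omega) (by omega)) (hsub hξ)
      _ ≤ 2 * κ ^ 2 * Z := by gcongr; exact hzZ _ (by omega) (by omega)
  have hdisp := mul_sq_sub_le_of_increment_le (hI ξ (hsub hξ)) (by positivity) hu0 hu hNk.le
    hgrowth hinc
  calc N k * fisherKL I (θhat (k + n)) (θhat k)
      ≤ N k * (I ξ * (θhat k - θhat (k + n)) ^ 2 / 2) := by gcongr
    _ = N k * I ξ * (θhat (k + n) - θhat k) ^ 2 / 2 := by ring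
    _ ≤ 2 * κ ^ 2 * Z * ((1 / √u - 1)⁻¹) ^ 2 / 2 := by gcongr
    _ = κ ^ 2 * ((1 / √u - 1)⁻¹) ^ 2 * Z := by ring

/-- "stability after propagation" for the SSA recursion
(inequality (5.2) of Theorem 5.3), under condition (A3). -/
theorem ssa_stability_after_propagation
    (Θ : Set ℝ) (hΘconv : Convex ℝ Θ) (κ : ℝ) (hκ : 1 ≤ κ)
    (I : ℝ → ℝ) (hIcont : ContinuousOn I Θ) (hIpos : ∀ u ∈ Θ, 0 < I u)
    (hIκ : ∀ u ∈ Θ, ∀ v ∈ Θ, Real.sqrt (I u / I v) ≤ κ)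
    (K : ℝ → ℝ → ℝ) (hK : ∀ a b, K a b = ∫ u in a..b, (u - a) * I u)
    (Kc : ℕ) (hKc : 1 ≤ Kc)
    (θtil : ℕ → ℝ) (hθtil : ∀ k, 1 ≤ k → k ≤ Kc → θtil k ∈ Θ)
    (N : ℕ → ℝ) (hN : ∀ k, 1 ≤ k → k ≤ Kc → 0 < N k)
    (z : ℕ → ℝ) (hz : ∀ k, 2 ≤ k → k ≤ Kc → 0 < z k)
    (Kag : ℝ → ℝ) (hKag01 : ∀ t, 0 ≤ t → Kag t ∈ Set.Icc (0 : ℝ) 1)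
    (hKagmono : AntitoneOn Kag (Set.Ici 0))
    (hKag0 : ∀ t, 1 ≤ t → Kag t = 0)
    (θhat : ℕ → ℝ) (hθhat1 : θhat 1 = θtil 1)
    (hθhatrec : ∀ k, 2 ≤ k → k ≤ Kc →
      θhat k = Kag (N k * K (θtil k) (θhat (k - 1)) / z k) * θtil k
        + (1 - Kag (N k * K (θtil k) (θhat (k - 1)) / z k)) * θhat (k - 1))
    (u₀ u : ℝ) (hu₀ : 0 < u₀) (hu₀u : u₀ ≤ u) (hu : u < 1)
    (hA3 : ∀ k, 2 ≤ k → k ≤ Kc →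
      u₀ ≤ N (k - 1) / N k ∧ N (k - 1) / N k ≤ u) :
    ∀ k k' : ℕ, 1 ≤ k → k < k' → k' ≤ Kc →
      N k * K (θhat k') (θhat k)
        ≤ κ ^ 2 * ((1 / Real.sqrt u - 1)⁻¹) ^ 2 * sSup (z '' {l | k < l ∧ l ≤ Kc}) :=
  ssa_stability_after_propagation_general Θ hΘconv κ I hIcont hIpos hIκ K hK Kc θtil hθtil N hN z hz
    Kag hKag01 hKag0 θhat hθhat1 hθhatrec u₀ u hu hA3
end
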